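/- arXiv:1512.09161 — 2 statements merged into one kernel-verified Lean document; each statement's English description precedes it below -/
import Mathlib

section
/- For a ∈ [0,1/3), let F(a) = ∫_{[0,1/3]} min((x−a)², (x−1/3)²) dP(x) be the distortion error on J_1 = [0,1/3] due to the two points a and 1/3. Then F attains its minimum over a ∈ [0,1/3) uniquely at a = 1/18, and the minimum value is F(1/18) = 1/648. -/
open MeasureTheory Set
open scoped ENNReal

noncomputable section

/-- The similarity map `S_j(x) = x/3^j + 1 - 1/3^(j-1)`. -/
def Smap (j : ℕ) (x : ℝ) : ℝ := x / 3 ^ j + 1 - 1 / 3 ^ (j - 1)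

/-- The similarity ratio `s_j = 3^(-j)`. -/
def srat (j : ℕ) : ℝ := (3 : ℝ)⁻¹ ^ j

/-- The probability `p_j = 2^(-j)`. -/
def prob (j : ℕ) : ℝ := (2 : ℝ)⁻¹ ^ j

/-- `J_j = S_j([0,1])`. -/
def Jset (j : ℕ) : Set ℝ := Smap j '' Set.Icc 0 1

/-- For a word `ω = ω₁⋯ω_n`, `S_ω = S_{ω₁} ∘ ⋯ ∘ S_{ω_n}`. -/
def Sword : List ℕ → ℝ → ℝ
  | [] => id
  | j :: ω => Smap j ∘ Sword ω

/-- `s_ω = s_{ω₁} ⋯ s_{ω_n}`. -/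
def sword (ω : List ℕ) : ℝ := (ω.map srat).prod

/-- `p_ω = p_{ω₁} ⋯ p_{ω_n}`. -/
def pword (ω : List ℕ) : ℝ := (ω.map prob).prod

/-- `J_ω = S_ω([0,1])`. -/
def Jword (ω : List ℕ) : Set ℝ := Sword ω '' Set.Icc 0 1

/-- `ω⁻(ω_{|ω|} + j)` : the word obtained from `ω` by increasing its last letter by `j`. -/
def wordInc (ω : List ℕ) (j : ℕ) : List ℕ := ω.dropLast ++ [ω.getLastD 1 + j]

/-- `a(ω) = S_ω(1/2)`. -/
def aw (ω : List ℕ) : ℝ := Sword ω (1 / 2)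

/-- `a(ω, ∞) = S_{ω⁻(ω_{|ω|}+1)}(1/2) + s_{ω⁻(ω_{|ω|}+1)}`. -/
def awInf (ω : List ℕ) : ℝ := Sword (wordInc ω 1) (1 / 2) + sword (wordInc ω 1)

/-- `J_{(ω,∞)} = ⋃_{j ≥ 1} J_{ω⁻(ω_{|ω|}+j)}`. -/
def JwordInf (ω : List ℕ) : Set ℝ := ⋃ j : ℕ, Jword (wordInc ω (j + 1))

/-- A (nonempty) word over the alphabet `ℕ = {1, 2, 3, …}`. -/
def IsWord (ω : List ℕ) : Prop := ω ≠ [] ∧ ∀ i ∈ ω, 1 ≤ i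

/-- The self-similarity equation `P = ∑_{j=1}^∞ 2^{-j} · P ∘ S_j^{-1}`. -/
def SelfSim (P : Measure ℝ) : Prop :=
  P = Measure.sum fun j : ℕ => ((2 : ℝ≥0∞) ^ (j + 1))⁻¹ • P.map (Smap (j + 1))

/-- The distortion error `∫ min_{a ∈ A} (x - a)² dP(x)` of a set `A` of points. -/
def err (P : Measure ℝ) (A : Set ℝ) : ℝ :=
  ∫ x, sInf ((fun a => (x - a) ^ 2) '' A) ∂P

/-- The `n`-th quantization error. -/
def quantErr (P : Measure ℝ) (n : ℕ) : ℝ :=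
  sInf {v | ∃ A : Set ℝ, A.Finite ∧ A.Nonempty ∧ A.ncard ≤ n ∧ v = err P A}

/-- An optimal set of `n`-means. -/
def IsOptimal (P : Measure ℝ) (n : ℕ) (A : Set ℝ) : Prop :=
  A.Finite ∧ A.Nonempty ∧ A.ncard ≤ n ∧ err P A = quantErr P n

/-- The Voronoi region of `a` with respect to `A`. -/
def voronoi (A : Set ℝ) (a : ℝ) : Set ℝ := {x | ∀ b ∈ A, |x - a| ≤ |x - b|}

/-- `α(ℓ) = {a(ω) : p_ω = 2^{-ℓ}} ∪ {a(ω,∞) : p_ω = 2^{-ℓ}}`. -/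
def alphaSet (l : ℕ) : Set ℝ :=
  {x | ∃ ω : List ℕ, IsWord ω ∧ pword ω = (2 : ℝ)⁻¹ ^ l ∧ (x = aw ω ∨ x = awInf ω)}

/-- The set `α_n(I)` built from `α(ℓ)` and `I ⊆ α(ℓ)`. -/
def alphaNI (l : ℕ) (I : Set ℝ) : Set ℝ :=
  (alphaSet l \ I)
    ∪ {x | ∃ ω : List ℕ, IsWord ω ∧ pword ω = (2 : ℝ)⁻¹ ^ l ∧ aw ω ∈ I ∧
        (x = aw (ω ++ [1]) ∨ x = awInf (ω ++ [1]))}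
    ∪ {x | ∃ ω : List ℕ, IsWord ω ∧ pword ω = (2 : ℝ)⁻¹ ^ l ∧ awInf ω ∈ I ∧
        (x = aw (wordInc ω 1) ∨ x = awInf (wordInc ω 1))}

/-! Since `S_{j+1} = (· / 3 + 2 / 3) ∘ S_j`, the self-similarity equation collapses to
`P = ½ P ∘ (· / 3)⁻¹ + ½ P ∘ (· / 3 + 2 / 3)⁻¹`: `P` is the Cantor measure, with mean `1/2` and
second moment `3/8`. Up to the null gap `(1/9, 2/9)`, `J₁` splits into `J₁₁ = [0, 1/9]` and
`J₁₂ = [2/9, 1/3]`, each carrying a copy of `P` of mass `1/4` scaled by `1/9`.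
For `a ≤ 1/9` the points of `J₁₁` are nearer to `a` and those of `J₁₂` nearer to `1/3`, so
`F(a) = ((a - 1/18)² + 1/648) / 4 + 1/864`. For `a > 1/9` the `J₁₁` term keeps this form, and the
`J₁₂` term is at least `1/2592` (the part of `P` on `[2/9, 7/27]`, of mass `1/8`) while `a ≤ 1/6`. -/

lemma min_sq_sub_eq_left {a b x : ℝ} (hab : a ≤ b) (hx : x ≤ (a + b) / 2) :
    min ((x - a) ^ 2) ((x - b) ^ 2) = (x - a) ^ 2 :=
  min_eq_left (by nlinarith [mul_nonneg (sub_nonneg.2 hab) (by linarith : 0 ≤ a + b - 2 * x)])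

lemma min_sq_sub_eq_right {a b x : ℝ} (hab : a ≤ b) (hx : (a + b) / 2 ≤ x) :
    min ((x - a) ^ 2) ((x - b) ^ 2) = (x - b) ^ 2 :=
  min_eq_right (by nlinarith [mul_nonneg (sub_nonneg.2 hab) (by linarith : 0 ≤ 2 * x - a - b)])

section Measure

variable {α β : Type*} [MeasurableSpace α] [MeasurableSpace β]

lemma MeasureTheory.Measure.restrict_add_eq_left {μ ν : Measure α} {s t : Set α}
    (hμ : ∀ᵐ x ∂μ, x ∈ s) (hν : ∀ᵐ x ∂ν, x ∈ t) (hst : Disjoint s t) :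
    (μ + ν).restrict s = μ := by
  have hνs : ν s = 0 :=
    measure_eq_zero_iff_ae_notMem.2 (hν.mono fun _ hx => hst.notMem_of_mem_right hx)
  rw [Measure.restrict_add, Measure.restrict_eq_self_of_ae_mem hμ,
    Measure.restrict_eq_zero.2 hνs, add_zero]

lemma MeasureTheory.Measure.add_apply_eq_zero {μ ν : Measure α} {s t u : Set α}
    (hμ : ∀ᵐ x ∂μ, x ∈ s) (hν : ∀ᵐ x ∂ν, x ∈ t) (hs : Disjoint u s) (ht : Disjoint u t) :
    (μ + ν) u = 0 := by
  rw [Measure.add_apply,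
    measure_eq_zero_iff_ae_notMem.2 (hμ.mono fun _ hx => hs.notMem_of_mem_right hx),
    measure_eq_zero_iff_ae_notMem.2 (hν.mono fun _ hx => ht.notMem_of_mem_right hx), add_zero]

variable {μ : Measure β} {ν : Measure α} {g : α → β} {c : ℝ≥0∞} {s t : Set β}

lemma measure_eq_of_restrict_eq_smul_map (hg : MeasurableEmbedding g)
    (h : μ.restrict s = c • ν.map g) (hts : t ⊆ s) : μ t = c * ν (g ⁻¹' t) := by
  rw [← Measure.restrict_apply_univ, ← Measure.restrict_restrict_of_subset hts, h,
    Measure.restrict_apply_univ, Measure.smul_apply, hg.map_apply, smul_eq_mul]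

lemma setIntegral_eq_of_restrict_eq_smul_map (hg : MeasurableEmbedding g)
    (h : μ.restrict s = c • ν.map g) (hts : t ⊆ s) (f : β → ℝ) :
    ∫ x in t, f x ∂μ = c.toReal * ∫ x in g ⁻¹' t, f (g x) ∂ν := by
  rw [← Measure.restrict_restrict_of_subset hts, h, Measure.restrict_smul, hg.restrict_map,
    integral_smul_measure, hg.integral_map, smul_eq_mul]

end Measure

lemma ContinuousOn.integrable_of_ae_mem {α : Type*} [MeasurableSpace α] [TopologicalSpace α]
    [OpensMeasurableSpace α] [T2Space α] {μ : Measure α} [IsFiniteMeasureOnCompacts μ]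
    {K : Set α} {f : α → ℝ} (hf : ContinuousOn f K) (hK : IsCompact K)
    (hμ : ∀ᵐ x ∂μ, x ∈ K) : Integrable f μ := by
  rw [← Measure.restrict_eq_self_of_ae_mem hμ]
  exact hf.integrableOn_compact hK

lemma setIntegral_Icc_eq_add_of_measure_Ioo_eq_zero {μ : Measure ℝ} {f : ℝ → ℝ} {a b c d : ℝ}
    (hab : a ≤ b) (hbc : b < c) (hcd : c ≤ d) (hgap : μ (Ioo b c) = 0)
    (hf : IntegrableOn f (Icc a d) μ) :
    ∫ x in Icc a d, f x ∂μ = ∫ x in Icc a b, f x ∂μ + ∫ x in Icc c d, f x ∂μ := by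
  have hdiff : Icc a d \ Ioo b c = Icc a b ∪ Icc c d := by
    ext x
    simp only [mem_sdiff, mem_Icc, mem_Ioo, mem_union, not_and_or, not_lt]
    constructor
    · rintro ⟨⟨hax, hxd⟩, hxb | hcx⟩
      · exact Or.inl ⟨hax, hxb⟩
      · exact Or.inr ⟨hcx, hxd⟩
    · rintro (⟨hax, hxb⟩ | ⟨hcx, hxd⟩)
      · exact ⟨⟨hax, by linarith⟩, Or.inl hxb⟩
      · exact ⟨⟨by linarith, hxd⟩, Or.inr hcx⟩
  have hdisj : Disjoint (Icc a b) (Icc c d) :=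
    disjoint_left.2 fun x hx hx' => by linarith [hx.2, hx'.1]
  rw [← setIntegral_congr_set (sdiff_null_ae_eq_self hgap), hdiff,
    setIntegral_union hdisj measurableSet_Icc (hf.mono_set (Icc_subset_Icc le_rfl (by linarith)))
      (hf.mono_set (Icc_subset_Icc (by linarith) le_rfl))]

lemma integral_eq_quadratic {μ : Measure ℝ} [IsProbabilityMeasure μ] {f : ℝ → ℝ}
    (h₁ : Integrable (fun x => x) μ) (h₂ : Integrable (fun x => x ^ 2) μ)
    (a b c : ℝ) (hf : ∀ x, f x = a * x ^ 2 + b * x + c) :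
    ∫ x, f x ∂μ = a * ∫ x, x ^ 2 ∂μ + b * ∫ x, x ∂μ + c := by
  have h₂₁ : Integrable (fun x => a * x ^ 2 + b * x) μ := (h₂.const_mul a).add (h₁.const_mul b)
  simp_rw [hf]
  rw [integral_add h₂₁ (integrable_const c), integral_add (h₂.const_mul a) (h₁.const_mul b),
    integral_const_mul, integral_const_mul, integral_const, probReal_univ, one_smul]

lemma measurableEmbedding_div_three : MeasurableEmbedding (· / 3 : ℝ → ℝ) := by
  simpa only [div_eq_mul_inv] using measurableEmbedding_mulRight₀ (by norm_num : (3 : ℝ)⁻¹ ≠ 0)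

lemma measurableEmbedding_div_three_add_two_thirds :
    MeasurableEmbedding (· / 3 + 2 / 3 : ℝ → ℝ) :=
  (measurableEmbedding_addRight _).comp measurableEmbedding_div_three

lemma preimage_div_three_Icc (a b : ℝ) : (· / 3 : ℝ → ℝ) ⁻¹' Icc a b = Icc (3 * a) (3 * b) := by
  ext x
  simp only [mem_preimage, mem_Icc]
  constructor <;> rintro ⟨h₁, h₂⟩ <;> constructor <;> linarith

lemma preimage_div_three_Ioo (a b : ℝ) : (· / 3 : ℝ → ℝ) ⁻¹' Ioo a b = Ioo (3 * a) (3 * b) := by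
  ext x
  simp only [mem_preimage, mem_Ioo]
  constructor <;> rintro ⟨h₁, h₂⟩ <;> constructor <;> linarith

lemma preimage_div_three_add_two_thirds_Icc (a b : ℝ) :
    (· / 3 + 2 / 3 : ℝ → ℝ) ⁻¹' Icc a b = Icc (3 * a - 2) (3 * b - 2) := by
  ext x
  simp only [mem_preimage, mem_Icc]
  constructor <;> rintro ⟨h₁, h₂⟩ <;> constructor <;> linarith

lemma Smap_one : Smap 1 = (· / 3) := by
  ext x
  simp [Smap]

lemma Smap_add_two (j : ℕ) : Smap (j + 2) = (· / 3 + 2 / 3) ∘ Smap (j + 1) := by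
  ext x
  simp only [Smap, Function.comp_apply, Nat.add_sub_cancel, show j + 2 - 1 = j + 1 by omega]
  field_simp
  ring

lemma ae_map_div_three_mem {P : Measure ℝ} (hsupp : ∀ᵐ x ∂P, x ∈ Icc (0 : ℝ) 1) :
    ∀ᵐ x ∂P.map (· / 3), x ∈ Icc (0 : ℝ) (1 / 3) :=
  measurableEmbedding_div_three.ae_map_iff.2 <| hsupp.mono fun _ hx =>
    ⟨by linarith [hx.1], by linarith [hx.2]⟩

lemma ae_map_div_three_add_two_thirds_mem {P : Measure ℝ} (hsupp : ∀ᵐ x ∂P, x ∈ Icc (0 : ℝ) 1) :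
    ∀ᵐ x ∂P.map (· / 3 + 2 / 3), x ∈ Icc (2 / 3 : ℝ) 1 :=
  measurableEmbedding_div_three_add_two_thirds.ae_map_iff.2 <| hsupp.mono fun _ hx =>
    ⟨by linarith [hx.1], by linarith [hx.2]⟩

def CantorSelfSim (μ : Measure ℝ) : Prop :=
  μ = (2 : ℝ≥0∞)⁻¹ • μ.map (· / 3) + (2 : ℝ≥0∞)⁻¹ • μ.map (· / 3 + 2 / 3)

theorem SelfSim.cantorSelfSim {P : Measure ℝ} (h : SelfSim P) : CantorSelfSim P := by
  have htail : (2 : ℝ≥0∞)⁻¹ • P.map (· / 3 + 2 / 3)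
      = Measure.sum fun j : ℕ => ((2 : ℝ≥0∞) ^ (j + 2))⁻¹ • P.map (Smap (j + 2)) := by
    conv_lhs => rw [h]
    rw [Measure.map_sum measurableEmbedding_div_three_add_two_thirds.measurable.aemeasurable]
    ext s hs
    rw [Measure.smul_apply, Measure.sum_apply _ hs, Measure.sum_apply _ hs, smul_eq_mul,
      ← ENNReal.tsum_mul_left]
    refine tsum_congr fun j => ?_
    rw [Measure.map_smul, Measure.map_map measurableEmbedding_div_three_add_two_thirds.measurable
      (by unfold Smap; fun_prop), ← Smap_add_two, Measure.smul_apply, Measure.smul_apply,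
      smul_eq_mul, smul_eq_mul, ← mul_assoc, ENNReal.inv_pow, ENNReal.inv_pow, ← pow_succ']
  unfold CantorSelfSim
  rw [htail]
  conv_lhs => rw [h]
  ext s hs
  rw [Measure.add_apply, Measure.sum_apply _ hs, Measure.sum_apply _ hs,
    tsum_eq_zero_add' ENNReal.summable]
  simp [Smap_one]

namespace CantorSelfSim

variable {P : Measure ℝ}

lemma restrict_Icc_zero_third (hP : CantorSelfSim P) (hsupp : ∀ᵐ x ∂P, x ∈ Icc (0 : ℝ) 1) :
    P.restrict (Icc 0 (1 / 3)) = (2 : ℝ≥0∞)⁻¹ • P.map (· / 3) := by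
  conv_lhs => rw [hP]
  exact Measure.restrict_add_eq_left (Measure.ae_smul_measure (ae_map_div_three_mem hsupp) _)
    (Measure.ae_smul_measure (ae_map_div_three_add_two_thirds_mem hsupp) _)
    (disjoint_left.2 fun x hx hx' => by linarith [hx.2, hx'.1])

lemma restrict_Icc_two_thirds_one (hP : CantorSelfSim P) (hsupp : ∀ᵐ x ∂P, x ∈ Icc (0 : ℝ) 1) :
    P.restrict (Icc (2 / 3) 1) = (2 : ℝ≥0∞)⁻¹ • P.map (· / 3 + 2 / 3) := by
  conv_lhs => rw [hP, add_comm]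
  exact Measure.restrict_add_eq_left
    (Measure.ae_smul_measure (ae_map_div_three_add_two_thirds_mem hsupp) _)
    (Measure.ae_smul_measure (ae_map_div_three_mem hsupp) _)
    (disjoint_left.2 fun x hx hx' => by linarith [hx.1, hx'.2])

lemma measure_Ioo_third_two_thirds (hP : CantorSelfSim P) (hsupp : ∀ᵐ x ∂P, x ∈ Icc (0 : ℝ) 1) :
    P (Ioo (1 / 3) (2 / 3)) = 0 := by
  rw [hP]
  exact Measure.add_apply_eq_zero (Measure.ae_smul_measure (ae_map_div_three_mem hsupp) _)
    (Measure.ae_smul_measure (ae_map_div_three_add_two_thirds_mem hsupp) _)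
    (disjoint_left.2 fun x hx hx' => by linarith [hx.1, hx'.2])
    (disjoint_left.2 fun x hx hx' => by linarith [hx.2, hx'.1])

lemma measure_Ioo_ninth_two_ninths (hP : CantorSelfSim P) (hsupp : ∀ᵐ x ∂P, x ∈ Icc (0 : ℝ) 1) :
    P (Ioo (1 / 9) (2 / 9)) = 0 := by
  rw [measure_eq_of_restrict_eq_smul_map measurableEmbedding_div_three
      (hP.restrict_Icc_zero_third hsupp) (Ioo_subset_Icc_self.trans (Icc_subset_Icc (by norm_num)
      (by norm_num))), preimage_div_three_Ioo]
  norm_num [hP.measure_Ioo_third_two_thirds hsupp]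

lemma measure_Icc_two_ninths_seven_twentysevenths [IsProbabilityMeasure P] (hP : CantorSelfSim P)
    (hsupp : ∀ᵐ x ∂P, x ∈ Icc (0 : ℝ) 1) : P (Icc (2 / 9) (7 / 27)) = 8⁻¹ := by
  have hleft := fun t (ht : t ⊆ Icc 0 (1 / 3)) => measure_eq_of_restrict_eq_smul_map
    measurableEmbedding_div_three (hP.restrict_Icc_zero_third hsupp) ht
  have hright := fun t (ht : t ⊆ Icc (2 / 3) 1) => measure_eq_of_restrict_eq_smul_map
    measurableEmbedding_div_three_add_two_thirds (hP.restrict_Icc_two_thirds_one hsupp) ht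
  rw [hleft _ (Icc_subset_Icc (by norm_num) (by norm_num)), preimage_div_three_Icc,
    hright _ (Icc_subset_Icc (by norm_num) (by norm_num)), preimage_div_three_add_two_thirds_Icc,
    hleft _ (Icc_subset_Icc (by norm_num) (by norm_num)), preimage_div_three_Icc]
  have hunit : P (Icc 0 1) = 1 := by
    rw [(ae_mem_iff_measure_eq measurableSet_Icc.nullMeasurableSet).1 hsupp, measure_univ]
  norm_num [hunit, ← ENNReal.mul_inv]

lemma setIntegral_Icc_zero_third (hP : CantorSelfSim P) (hsupp : ∀ᵐ x ∂P, x ∈ Icc (0 : ℝ) 1)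
    (f : ℝ → ℝ) : ∫ x in Icc 0 (1 / 3), f x ∂P = 2⁻¹ * ∫ x, f (x / 3) ∂P := by
  rw [setIntegral_eq_of_restrict_eq_smul_map measurableEmbedding_div_three
    (hP.restrict_Icc_zero_third hsupp) subset_rfl, preimage_div_three_Icc]
  norm_num [Measure.restrict_eq_self_of_ae_mem hsupp]

lemma setIntegral_Icc_two_thirds_one (hP : CantorSelfSim P)
    (hsupp : ∀ᵐ x ∂P, x ∈ Icc (0 : ℝ) 1) (f : ℝ → ℝ) :
    ∫ x in Icc (2 / 3) 1, f x ∂P = 2⁻¹ * ∫ x, f (x / 3 + 2 / 3) ∂P := by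
  rw [setIntegral_eq_of_restrict_eq_smul_map measurableEmbedding_div_three_add_two_thirds
    (hP.restrict_Icc_two_thirds_one hsupp) subset_rfl, preimage_div_three_add_two_thirds_Icc]
  norm_num [Measure.restrict_eq_self_of_ae_mem hsupp]

lemma setIntegral_Icc_zero_ninth (hP : CantorSelfSim P) (hsupp : ∀ᵐ x ∂P, x ∈ Icc (0 : ℝ) 1)
    (f : ℝ → ℝ) : ∫ x in Icc 0 (1 / 9), f x ∂P = 4⁻¹ * ∫ x, f (x / 9) ∂P := by
  have hpre : (· / 3 : ℝ → ℝ) ⁻¹' Icc 0 (1 / 9) = Icc 0 (1 / 3) := by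
    rw [preimage_div_three_Icc]; norm_num
  rw [setIntegral_eq_of_restrict_eq_smul_map measurableEmbedding_div_three
    (hP.restrict_Icc_zero_third hsupp) (Icc_subset_Icc le_rfl (by norm_num)), hpre,
    hP.setIntegral_Icc_zero_third hsupp]
  simp only [div_div]
  norm_num
  ring

lemma setIntegral_Icc_two_ninths_third (hP : CantorSelfSim P)
    (hsupp : ∀ᵐ x ∂P, x ∈ Icc (0 : ℝ) 1) (f : ℝ → ℝ) :
    ∫ x in Icc (2 / 9) (1 / 3), f x ∂P = 4⁻¹ * ∫ x, f (x / 9 + 2 / 9) ∂P := by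
  have hpre : (· / 3 : ℝ → ℝ) ⁻¹' Icc (2 / 9) (1 / 3) = Icc (2 / 3) 1 := by
    rw [preimage_div_three_Icc]; norm_num
  have hcomp : ∀ x : ℝ, (x / 3 + 2 / 3) / 3 = x / 9 + 2 / 9 := fun x => by ring
  rw [setIntegral_eq_of_restrict_eq_smul_map measurableEmbedding_div_three
    (hP.restrict_Icc_zero_third hsupp) (Icc_subset_Icc (by norm_num) le_rfl), hpre,
    hP.setIntegral_Icc_two_thirds_one hsupp]
  simp only [hcomp]
  norm_num
  ring

lemma integral_eq_half_add [IsFiniteMeasure P] (hP : CantorSelfSim P)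
    (hsupp : ∀ᵐ x ∂P, x ∈ Icc (0 : ℝ) 1) {f : ℝ → ℝ} (hf : Continuous f) :
    ∫ x, f x ∂P = 2⁻¹ * ∫ x, f (x / 3) ∂P + 2⁻¹ * ∫ x, f (x / 3 + 2 / 3) ∂P := by
  rw [← hP.setIntegral_Icc_zero_third hsupp, ← hP.setIntegral_Icc_two_thirds_one hsupp,
    ← setIntegral_Icc_eq_add_of_measure_Ioo_eq_zero (by norm_num) (by norm_num) (by norm_num)
      (hP.measure_Ioo_third_two_thirds hsupp) hf.integrableOn_Icc,
    Measure.restrict_eq_self_of_ae_mem hsupp]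

lemma integral_id [IsProbabilityMeasure P] (hP : CantorSelfSim P)
    (hsupp : ∀ᵐ x ∂P, x ∈ Icc (0 : ℝ) 1) : ∫ x, x ∂P = 1 / 2 := by
  have h₁ := continuous_id'.continuousOn.integrable_of_ae_mem isCompact_Icc hsupp
  have h₂ := (continuous_pow 2).continuousOn.integrable_of_ae_mem isCompact_Icc hsupp
  have h := hP.integral_eq_half_add hsupp continuous_id'
  rw [integral_eq_quadratic (f := fun x => x / 3) h₁ h₂ 0 (1 / 3) 0 (fun x => by ring),
    integral_eq_quadratic (f := fun x => x / 3 + 2 / 3) h₁ h₂ 0 (1 / 3) (2 / 3)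
      (fun x => by ring)] at h
  linarith

lemma integral_sq [IsProbabilityMeasure P] (hP : CantorSelfSim P)
    (hsupp : ∀ᵐ x ∂P, x ∈ Icc (0 : ℝ) 1) : ∫ x, x ^ 2 ∂P = 3 / 8 := by
  have h₁ := continuous_id'.continuousOn.integrable_of_ae_mem isCompact_Icc hsupp
  have h₂ := (continuous_pow 2).continuousOn.integrable_of_ae_mem isCompact_Icc hsupp
  have h := hP.integral_eq_half_add hsupp (continuous_pow 2)
  rw [integral_eq_quadratic (f := fun x => (x / 3) ^ 2) h₁ h₂ (1 / 9) 0 0 (fun x => by ring),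
    integral_eq_quadratic (f := fun x => (x / 3 + 2 / 3) ^ 2) h₁ h₂ (1 / 9) (4 / 9) (4 / 9)
      (fun x => by ring), hP.integral_id hsupp] at h
  linarith

lemma integral_quadratic [IsProbabilityMeasure P] (hP : CantorSelfSim P)
    (hsupp : ∀ᵐ x ∂P, x ∈ Icc (0 : ℝ) 1) {f : ℝ → ℝ} (a b c : ℝ)
    (hf : ∀ x, f x = a * x ^ 2 + b * x + c) : ∫ x, f x ∂P = a * (3 / 8) + b * (1 / 2) + c := by
  rw [integral_eq_quadratic (continuous_id'.continuousOn.integrable_of_ae_mem isCompact_Icc hsupp)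
    ((continuous_pow 2).continuousOn.integrable_of_ae_mem isCompact_Icc hsupp) a b c hf,
    hP.integral_sq hsupp, hP.integral_id hsupp]

lemma setIntegral_Icc_zero_third_eq_add [IsFiniteMeasure P] (hP : CantorSelfSim P)
    (hsupp : ∀ᵐ x ∂P, x ∈ Icc (0 : ℝ) 1) {f : ℝ → ℝ} (hf : Continuous f) :
    ∫ x in Icc 0 (1 / 3), f x ∂P
      = ∫ x in Icc 0 (1 / 9), f x ∂P + ∫ x in Icc (2 / 9) (1 / 3), f x ∂P :=
  setIntegral_Icc_eq_add_of_measure_Ioo_eq_zero (by norm_num) (by norm_num) (by norm_num)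
    (hP.measure_Ioo_ninth_two_ninths hsupp) hf.integrableOn_Icc

lemma setIntegral_Icc_zero_ninth_min [IsProbabilityMeasure P] (hP : CantorSelfSim P)
    (hsupp : ∀ᵐ x ∂P, x ∈ Icc (0 : ℝ) 1) {a : ℝ} (ha₀ : 0 ≤ a) (ha : a ≤ 1 / 3) :
    ∫ x in Icc 0 (1 / 9), min ((x - a) ^ 2) ((x - 1 / 3) ^ 2) ∂P
      = ((a - 1 / 18) ^ 2 + 1 / 648) / 4 := by
  rw [setIntegral_congr_fun measurableSet_Icc
      fun x hx => min_sq_sub_eq_left ha (by linarith [hx.2]),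
    hP.setIntegral_Icc_zero_ninth hsupp,
    hP.integral_quadratic hsupp (1 / 81) (-2 * a / 9) (a ^ 2) fun x => by ring]
  ring

lemma setIntegral_Icc_two_ninths_third_min_of_le [IsProbabilityMeasure P] (hP : CantorSelfSim P)
    (hsupp : ∀ᵐ x ∂P, x ∈ Icc (0 : ℝ) 1) {a : ℝ} (ha : a ≤ 1 / 9) :
    ∫ x in Icc (2 / 9) (1 / 3), min ((x - a) ^ 2) ((x - 1 / 3) ^ 2) ∂P = 1 / 864 := by
  rw [setIntegral_congr_fun measurableSet_Icc
      fun x hx => min_sq_sub_eq_right (by linarith) (by linarith [hx.1]),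
    hP.setIntegral_Icc_two_ninths_third hsupp,
    hP.integral_quadratic hsupp (1 / 81) (-2 / 81) (1 / 81) fun x => by ring]
  norm_num

lemma le_setIntegral_Icc_two_ninths_third_min [IsProbabilityMeasure P] (hP : CantorSelfSim P)
    (hsupp : ∀ᵐ x ∂P, x ∈ Icc (0 : ℝ) 1) {a : ℝ} (ha : a ≤ 1 / 6) :
    1 / 2592 ≤ ∫ x in Icc (2 / 9) (1 / 3), min ((x - a) ^ 2) ((x - 1 / 3) ^ 2) ∂P := by
  have hcont : Continuous fun x : ℝ => min ((x - a) ^ 2) ((x - 1 / 3) ^ 2) := by fun_prop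
  have hfar : ∀ x ∈ Icc (2 / 9 : ℝ) (7 / 27), 1 / 324 ≤ min ((x - a) ^ 2) ((x - 1 / 3) ^ 2) := by
    rintro x ⟨hx₁, hx₂⟩
    exact le_min (by nlinarith [sq_nonneg (x - a - 1 / 18)])
      (by nlinarith [sq_nonneg (x - 1 / 3 + 1 / 18)])
  calc (1 / 2592 : ℝ) = P.real (Icc (2 / 9) (7 / 27)) • (1 / 324) := by
        rw [measureReal_def, hP.measure_Icc_two_ninths_seven_twentysevenths hsupp]; norm_num
    _ ≤ ∫ x in Icc (2 / 9) (7 / 27), min ((x - a) ^ 2) ((x - 1 / 3) ^ 2) ∂P :=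
        setIntegral_ge_of_const_le measurableSet_Icc (measure_ne_top _ _) hfar
          hcont.integrableOn_Icc
    _ ≤ ∫ x in Icc (2 / 9) (1 / 3), min ((x - a) ^ 2) ((x - 1 / 3) ^ 2) ∂P :=
        setIntegral_mono_set hcont.integrableOn_Icc
          (ae_of_all _ fun _ => le_min (sq_nonneg _) (sq_nonneg _))
          (Icc_subset_Icc le_rfl (by norm_num)).eventuallyLE

end CantorSelfSim

theorem two_point_error_on_J1 (P : Measure ℝ) [IsProbabilityMeasure P]
    (hsupp : P (Set.Icc 0 1) = 1) (hself : SelfSim P) :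
    (∫ x in Set.Icc (0 : ℝ) (1 / 3), min ((x - 1 / 18) ^ 2) ((x - 1 / 3) ^ 2) ∂P) = 1 / 648 ∧
    ∀ a ∈ Set.Ico (0 : ℝ) (1 / 3), a ≠ 1 / 18 →
      1 / 648 < ∫ x in Set.Icc (0 : ℝ) (1 / 3), min ((x - a) ^ 2) ((x - 1 / 3) ^ 2) ∂P := by
  have hP := hself.cantorSelfSim
  have hae : ∀ᵐ x ∂P, x ∈ Icc (0 : ℝ) 1 :=
    (ae_mem_iff_measure_eq measurableSet_Icc.nullMeasurableSet).2 (by rw [hsupp, measure_univ])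
  have hsplit (a : ℝ) := hP.setIntegral_Icc_zero_third_eq_add hae
    (f := fun x => min ((x - a) ^ 2) ((x - 1 / 3) ^ 2)) (by fun_prop)
  refine ⟨?_, fun a ⟨ha₀, ha⟩ hne => ?_⟩
  · rw [hsplit, hP.setIntegral_Icc_zero_ninth_min hae (by norm_num) (by norm_num),
      hP.setIntegral_Icc_two_ninths_third_min_of_le hae (by norm_num)]
    norm_num
  have hpos : 0 < (a - 1 / 18) ^ 2 := sq_pos_of_ne_zero (sub_ne_zero.2 hne)
  rw [hsplit, hP.setIntegral_Icc_zero_ninth_min hae ha₀ ha.le]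
  rcases le_or_gt a (1 / 9) with h9 | h9
  · rw [hP.setIntegral_Icc_two_ninths_third_min_of_le hae h9]
    linarith
  rcases le_or_gt a (1 / 6) with h6 | h6
  · nlinarith [hP.le_setIntegral_Icc_two_ninths_third_min hae h6]
  · nlinarith [setIntegral_nonneg (μ := P) (measurableSet_Icc (a := (2 / 9 : ℝ)) (b := 1 / 3))
      fun x _ => le_min (sq_nonneg (x - a)) (sq_nonneg (x - 1 / 3))]

end
end

section
/- For b ∈ (2/3,1], let G(b) = ∫_{[2/3,1]} min((x−2/3)², (x−b)²) dP(x) be the distortion error on [2/3,1] due to the two points 2/3 and b. Then G attains its minimum over b ∈ (2/3,1] uniquely at b = 17/18, and the minimum value is G(17/18) = 1/648. -/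
open MeasureTheory Set
open scoped ENNReal

noncomputable section

/-!
Pushing the integral through the self-similarity equation splits `[2/3, 1]` into `J_2` and
`⋃_{j ≥ 3} J_j`. On `J_j` with `j ≥ 3` (which lies in `[8/9, 1]`) the nearer point is always `b`,
so with the moments `∫ x = 1/2`, `∫ x² = 3/8` that part is `(b - 17/18)²/4 + 1/2592`. On `J_2`
the point `2/3` is the nearer one as soon as `b ≥ 8/9`, contributing `1/864`; this gives
`G(b) = 1/648 + (b - 17/18)²/4` on `[8/9, 1]`. For `b < 8/9`, either `b ≤ 212/243` and the square
alone exceeds the minimum, or `S_2` maps `J_2 ∪ J_3` (of mass `3/8`) to points at distance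
`≥ 2/27` from both `2/3` and `b`, which makes the `J_2` part at least `1/1944`.
-/

lemma smap_succ (j : ℕ) (x : ℝ) :
    Smap (j + 1) x = x * 3⁻¹ ^ (j + 1) + (1 - 3 * 3⁻¹ ^ (j + 1)) := by
  simp only [Smap, Nat.add_sub_cancel, inv_pow]
  field_simp
  ring

lemma smap_two (x : ℝ) : Smap 2 x = x / 9 + 2 / 3 := by
  norm_num [Smap]
  ring

lemma measurable_smap (j : ℕ) : Measurable (Smap j) := by
  unfold Smap
  fun_prop

lemma smap_succ_mem_Icc (j : ℕ) {x : ℝ} (hx : x ∈ Icc (0 : ℝ) 1) :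
    Smap (j + 1) x ∈ Icc (1 - 3 * (3 : ℝ)⁻¹ ^ (j + 1)) (1 - 2 * 3⁻¹ ^ (j + 1)) := by
  have hpos : (0 : ℝ) < 3⁻¹ ^ (j + 1) := by positivity
  rw [smap_succ]
  constructor <;> nlinarith [hx.1, hx.2]

lemma smap_add_three_mem_Icc (j : ℕ) {x : ℝ} (hx : x ∈ Icc (0 : ℝ) 1) :
    Smap (j + 3) x ∈ Icc (8 / 9 : ℝ) 1 := by
  have hle : (3 : ℝ)⁻¹ ^ (j + 3) ≤ 3⁻¹ ^ 3 :=
    pow_le_pow_of_le_one (by norm_num) (by norm_num) (by omega)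
  have hpos : (0 : ℝ) < 3⁻¹ ^ (j + 3) := by positivity
  obtain ⟨h₁, h₂⟩ := smap_succ_mem_Icc (j + 2) hx
  norm_num at hle
  constructor <;> linarith

lemma hasSum_geometric_combination (a b c : ℝ) :
    HasSum (fun j : ℕ => (2 : ℝ)⁻¹ ^ j * (a + b * 3⁻¹ ^ j + c * (3⁻¹ ^ j) ^ 2))
      (2 * a + 6 / 5 * b + 18 / 17 * c) := by
  have h2 := (hasSum_geometric_of_lt_one (r := (2 : ℝ)⁻¹) (by norm_num) (by norm_num)).mul_left a
  have h6 := (hasSum_geometric_of_lt_one (r := (6 : ℝ)⁻¹) (by norm_num) (by norm_num)).mul_left b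
  have h18 :=
    (hasSum_geometric_of_lt_one (r := (18 : ℝ)⁻¹) (by norm_num) (by norm_num)).mul_left c
  rw [show 2 * a + 6 / 5 * b + 18 / 17 * c
      = a * (1 - 2⁻¹)⁻¹ + b * (1 - 6⁻¹)⁻¹ + c * (1 - 18⁻¹)⁻¹ by norm_num; ring]
  refine ((h2.add h6).add h18).congr_fun fun j => ?_
  rw [show (6 : ℝ)⁻¹ = 2⁻¹ * 3⁻¹ by norm_num, show (18 : ℝ)⁻¹ = 2⁻¹ * 3⁻¹ * 3⁻¹ by norm_num,
    mul_pow, mul_pow, mul_pow]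
  ring

section ProbabilityMeasure

variable {P : Measure ℝ} [IsProbabilityMeasure P]

lemma integral_mul_add (h₁ : Integrable (fun x => x) P) (a c : ℝ) :
    ∫ x, (x * a + c) ∂P = (∫ x, x ∂P) * a + c := by
  rw [integral_add (h₁.mul_const a) (integrable_const c), integral_mul_const, integral_const]
  simp

lemma integral_mul_add_sq (h₁ : Integrable (fun x => x) P) (h₂ : Integrable (fun x => x ^ 2) P)
    (a c : ℝ) :
    ∫ x, (x * a + c) ^ 2 ∂P = (∫ x, x ^ 2 ∂P) * a ^ 2 + (∫ x, x ∂P) * (2 * a * c) + c ^ 2 := by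
  have hexp : (fun x : ℝ => (x * a + c) ^ 2)
      = fun x => x ^ 2 * a ^ 2 + (x * (2 * a * c) + c ^ 2) := by
    funext x
    ring
  have h₃ : Integrable (fun x => x * (2 * a * c) + c ^ 2) P :=
    (h₁.mul_const _).add (integrable_const _)
  rw [hexp, integral_add (h₂.mul_const _) h₃,
    integral_mul_add h₁, integral_mul_const]
  ring

variable (hsupp : P (Icc 0 1) = 1)
include hsupp

lemma ae_mem_Icc_of_measure_eq_one : ∀ᵐ x ∂P, x ∈ Icc (0 : ℝ) 1 :=
  (ae_mem_iff_measure_eq measurableSet_Icc.nullMeasurableSet).2 (by rw [hsupp, measure_univ])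

lemma integral_congr_of_eqOn_Icc {f g : ℝ → ℝ} (hfg : EqOn f g (Icc 0 1)) :
    ∫ x, f x ∂P = ∫ x, g x ∂P :=
  integral_congr_ae ((ae_mem_Icc_of_measure_eq_one hsupp).mono hfg)

lemma integrable_of_continuous {f : ℝ → ℝ} (hf : Continuous f) : Integrable f P := by
  rw [← Measure.restrict_eq_self_of_ae_mem (ae_mem_Icc_of_measure_eq_one hsupp)]
  exact hf.continuousOn.integrableOn_compact isCompact_Icc

end ProbabilityMeasure

theorem SelfSim.hasSum_integral {P : Measure ℝ} (hself : SelfSim P) {f : ℝ → ℝ}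
    (hf : Integrable f P) :
    HasSum (fun j : ℕ => (2 : ℝ)⁻¹ ^ (j + 1) * ∫ x, f (Smap (j + 1) x) ∂P) (∫ x, f x ∂P) := by
  have hf' : Integrable f (Measure.sum fun j : ℕ =>
      ((2 : ℝ≥0∞) ^ (j + 1))⁻¹ • P.map (Smap (j + 1))) := hself ▸ hf
  have h := hasSum_integral_measure hf'
  rw [← hself] at h
  refine h.congr_fun fun j => ?_
  have hmap : Integrable f (P.map (Smap (j + 1))) :=
    (integrable_smul_measure (by simp) (by simp)).1 (hf'.mono_measure (Measure.le_sum _ j))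
  rw [integral_smul_measure, integral_map (measurable_smap _).aemeasurable hmap.1, smul_eq_mul]
  simp [ENNReal.toReal_inv, ENNReal.toReal_pow]

def errJ2 (P : Measure ℝ) (b : ℝ) : ℝ :=
  ∫ x, min ((Smap 2 x - 2 / 3) ^ 2) ((Smap 2 x - b) ^ 2) ∂P

lemma errJ2_nonneg (P : Measure ℝ) (b : ℝ) : 0 ≤ errJ2 P b :=
  integral_nonneg fun _ => le_min (sq_nonneg _) (sq_nonneg _)

section SelfSimilar

variable {P : Measure ℝ} [IsProbabilityMeasure P] (hsupp : P (Icc 0 1) = 1) (hself : SelfSim P)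
include hsupp hself

lemma integral_id_of_selfSim : ∫ x, x ∂P = 1 / 2 := by
  have h₁ : Integrable (fun x : ℝ => x) P := integrable_of_continuous hsupp continuous_id
  have h := hself.hasSum_integral h₁
  simp_rw [smap_succ, integral_mul_add h₁] at h
  have hgeom := (hasSum_geometric_combination (1 / 2) (((∫ x, x ∂P) - 3) / 6) 0).unique
    (h.congr_fun fun j => by ring)
  linarith

lemma integral_sq_of_selfSim : ∫ x, x ^ 2 ∂P = 3 / 8 := by
  have h₁ : Integrable (fun x : ℝ => x) P := integrable_of_continuous hsupp continuous_id
  have h₂ : Integrable (fun x : ℝ => x ^ 2) P :=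
    integrable_of_continuous hsupp (continuous_pow 2)
  have h := hself.hasSum_integral h₂
  simp_rw [smap_succ, integral_mul_add_sq h₁ h₂, integral_id_of_selfSim hsupp hself] at h
  have hgeom := (hasSum_geometric_combination (1 / 2) (-5 / 6)
    (((∫ x, x ^ 2 ∂P) + 6) / 18)).unique (h.congr_fun fun j => by ring)
  linarith

-- `S_k` has mean `1 - (5/2) 3^{-k}` and variance `9^{-k}/8` under `P`, where `k = j + 1`.
lemma integral_smap_sub_sq (j : ℕ) (b : ℝ) :
    ∫ x, (Smap (j + 1) x - b) ^ 2 ∂P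
      = (1 - 5 / 2 * 3⁻¹ ^ (j + 1) - b) ^ 2 + (3⁻¹ ^ (j + 1)) ^ 2 / 8 := by
  have h₁ : Integrable (fun x : ℝ => x) P := integrable_of_continuous hsupp continuous_id
  have h₂ : Integrable (fun x : ℝ => x ^ 2) P :=
    integrable_of_continuous hsupp (continuous_pow 2)
  simp_rw [smap_succ, add_sub_assoc]
  rw [integral_mul_add_sq h₁ h₂, integral_id_of_selfSim hsupp hself,
    integral_sq_of_selfSim hsupp hself]
  ring

lemma setIntegral_Icc_min_sq_eq {b : ℝ} (hb : 2 / 3 ≤ b) (hb' : b ≤ 1) :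
    ∫ x in Icc (2 / 3 : ℝ) 1, min ((x - 2 / 3) ^ 2) ((x - b) ^ 2) ∂P
      = errJ2 P b / 4 + (b - 17 / 18) ^ 2 / 4 + 1 / 2592 := by
  rw [← integral_indicator measurableSet_Icc]
  set g := (Icc (2 / 3 : ℝ) 1).indicator fun y => min ((y - 2 / 3) ^ 2) ((y - b) ^ 2)
  have hg : Integrable g P :=
    (integrable_of_continuous hsupp (by fun_prop)).indicator measurableSet_Icc
  have hsum := hself.hasSum_integral hg
  have hJ1 : ∫ x, g (Smap 1 x) ∂P = 0 := by
    rw [integral_congr_of_eqOn_Icc hsupp (g := fun _ => 0), integral_zero]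
    intro x hx
    have := (smap_succ_mem_Icc 0 hx).2
    exact indicator_of_notMem (fun h => by norm_num at this h; linarith [h.1]) _
  have hJ2 : ∫ x, g (Smap 2 x) ∂P = errJ2 P b := by
    refine integral_congr_of_eqOn_Icc hsupp fun x hx => indicator_of_mem ?_ _
    have := smap_succ_mem_Icc 1 hx
    norm_num at this ⊢
    constructor <;> linarith [this.1, this.2]
  -- on `J_j` with `j ≥ 3` the nearer point is always `b`
  have hJ3 : ∀ j : ℕ, ∫ x, g (Smap (j + 3) x) ∂P = ∫ x, (Smap (j + 2 + 1) x - b) ^ 2 ∂P := by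
    intro j
    refine integral_congr_of_eqOn_Icc hsupp fun x hx => ?_
    obtain ⟨h₁, h₂⟩ := smap_add_three_mem_Icc j hx
    exact (indicator_of_mem (show Smap (j + 3) x ∈ Icc (2 / 3) 1 from ⟨by linarith, h₂⟩) _).trans
      (min_eq_right (by nlinarith))
  have htail := (hasSum_nat_add_iff' 2).2 hsum
  simp only [Finset.sum_range_succ, Finset.sum_range_zero, hJ1, hJ2, hJ3,
    integral_smap_sub_sq hsupp hself] at htail
  have := (hasSum_geometric_combination ((1 - b) ^ 2 / 8) (-(5 * (1 - b)) / 216)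
    (17 / 15552)).unique (htail.congr_fun fun j => by ring)
  linarith

lemma errJ2_eq_of_le {b : ℝ} (hb : 8 / 9 ≤ b) : errJ2 P b = 1 / 216 := by
  have hfar : ∫ x, (Smap (1 + 1) x - 2 / 3) ^ 2 ∂P = 1 / 216 := by
    rw [integral_smap_sub_sq hsupp hself]
    norm_num
  rw [← hfar]
  refine integral_congr_of_eqOn_Icc hsupp fun x hx => min_eq_left ?_
  rw [smap_two]
  nlinarith [hx.1, hx.2]

lemma three_div_eight_le_measureReal_Icc : 3 / 8 ≤ P.real (Icc (2 / 3) (25 / 27)) := by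
  set E := Icc (2 / 3 : ℝ) (25 / 27)
  have hE : Integrable (E.indicator (1 : ℝ → ℝ)) P :=
    (integrable_const (1 : ℝ)).indicator measurableSet_Icc
  have h := hself.hasSum_integral hE
  rw [integral_indicator_one measurableSet_Icc] at h
  -- `S_2` and `S_3` map `[0, 1]` into `E`
  have hone : ∀ j ∈ ({1, 2} : Finset ℕ), ∫ x, E.indicator (1 : ℝ → ℝ) (Smap (j + 1) x) ∂P = 1 := by
    intro j hj
    rw [integral_congr_of_eqOn_Icc hsupp (g := fun _ => 1), integral_const, smul_eq_mul, mul_one,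
      probReal_univ]
    intro x hx
    refine indicator_of_mem ?_ _
    have := smap_succ_mem_Icc j hx
    simp only [Finset.mem_insert, Finset.mem_singleton] at hj
    rcases hj with rfl | rfl <;> norm_num at this ⊢ <;> constructor <;> linarith [this.1, this.2]
  have hle := sum_le_hasSum {1, 2} (fun j _ => mul_nonneg (by positivity)
    (integral_nonneg fun _ => indicator_nonneg (fun _ _ => zero_le_one) _)) h
  rw [Finset.sum_pair (by norm_num), hone 1 (by simp), hone 2 (by simp)] at hle
  norm_num at hle
  linarith

lemma one_div_486_le_errJ2 {b : ℝ} (hb : 212 / 243 ≤ b) : 1 / 486 ≤ errJ2 P b := by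
  set E := Icc (2 / 3 : ℝ) (25 / 27)
  calc (1 / 486 : ℝ) ≤ P.real E * (4 / 729) := by
        nlinarith [three_div_eight_le_measureReal_Icc hsupp hself]
    _ = ∫ x, E.indicator (fun _ => (4 / 729 : ℝ)) x ∂P := by
        rw [integral_indicator_const _ measurableSet_Icc, smul_eq_mul]
    _ ≤ errJ2 P b := by
        refine integral_mono ((integrable_const _).indicator measurableSet_Icc)
          (integrable_of_continuous hsupp (by unfold Smap; fun_prop)) fun x => ?_
        by_cases hx : x ∈ E
        · rw [indicator_of_mem hx, smap_two]
          obtain ⟨h₁, h₂⟩ := hx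
          exact le_min (by nlinarith) (by nlinarith)
        · rw [indicator_of_notMem hx]
          exact le_min (sq_nonneg _) (sq_nonneg _)

lemma lt_errJ2_add_sq {b : ℝ} (hb : b < 8 / 9) : 1 / 216 < errJ2 P b + (b - 17 / 18) ^ 2 := by
  rcases le_or_gt b (212 / 243) with hb' | hb'
  · nlinarith [errJ2_nonneg P b]
  · nlinarith [one_div_486_le_errJ2 hsupp hself hb'.le]

end SelfSimilar

theorem two_point_error_on_J1inf (P : Measure ℝ) [IsProbabilityMeasure P]
    (hsupp : P (Set.Icc 0 1) = 1) (hself : SelfSim P) :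
    (∫ x in Set.Icc (2 / 3 : ℝ) 1, min ((x - 2 / 3) ^ 2) ((x - 17 / 18) ^ 2) ∂P) = 1 / 648 ∧
    ∀ b ∈ Set.Ioc (2 / 3 : ℝ) 1, b ≠ 17 / 18 →
      1 / 648 < ∫ x in Set.Icc (2 / 3 : ℝ) 1, min ((x - 2 / 3) ^ 2) ((x - b) ^ 2) ∂P := by
  refine ⟨?_, fun b hb hne => ?_⟩
  · rw [setIntegral_Icc_min_sq_eq hsupp hself (by norm_num) (by norm_num),
      errJ2_eq_of_le hsupp hself (by norm_num)]
    norm_num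
  · rw [setIntegral_Icc_min_sq_eq hsupp hself hb.1.le hb.2]
    rcases le_or_gt (8 / 9) b with hb' | hb'
    · have hsq : 0 < (b - 17 / 18) ^ 2 := sq_pos_of_ne_zero (sub_ne_zero.2 hne)
      rw [errJ2_eq_of_le hsupp hself hb']
      linarith
    · linarith [lt_errJ2_add_sq hsupp hself hb']

end
end
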